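/- For a prime p, an even integer k, a complex number s, and any nonzero integer b, define f_{p,b}(s) := [p^{-(s-1)-k/2}((Σ_{i=1}^{v} (p-1) p^{i-1+i(2s+k-2)}) - p^{v+(v+1)(2s+k-2)}) + 1] / [ζ_p^{-1}(-2s-k+2) ζ_p(-2s-k+1; v)], where v = v_p(b) and ζ_p(s; v) := Σ_{n=0}^{v} p^{-ns}. Then the ratio ψ_{p,b}(s) := f_{p,b}(1-k-s) / f_{p,b}(s) is independent of b; explicitly ψ_{p,b}(s) = (1 + p^{s+k/2-1}) / (1 + p^{-s-k/2}). -/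

import Mathlib

/-!
Put `x = p ^ (s + k/2 - 1)`. Then `f_{p,b}(s)` is a rational function of `x`, and
`s ↦ 1 - k - s` becomes `x ↦ w` with `p x w = 1`. Summing the geometric series in the
numerator gives `(1 + x) f = ((1 + x) S(x) - 1) / (x S(x))`, where `S(x) = Σ_{n ≤ v} (p x²)^n`
is the truncated zeta factor. Reversing the order of summation relates `S(x)` and `S(w)`,
and yields `(x - w) S(x) S(w) = x S(x) - w S(w)`, which says exactly that `(1 + x) f`
takes the same value at `x` and `w`.
-/

open Complex

/-- The local factor `f_{p,b}(s)` (depending on `v = v_p(b)`):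
`f_{p,b}(s) = [p^{-(s-1)-k/2}((Σ_{i=1}^{v}(p-1)p^{i-1+i(2s+k-2)}) - p^{v+(v+1)(2s+k-2)}) + 1]
  / [ζ_p^{-1}(-2s-k+2) · ζ_p(-2s-k+1; v)]`,
where `ζ_p^{-1}(x) = 1 - p^{-x}` and `ζ_p(x; v) = Σ_{n=0}^{v} p^{-nx}`. -/
noncomputable def fLocal (p : ℕ) (k : ℤ) (v : ℕ) (z : ℂ) : ℂ :=
  ((p : ℂ) ^ (-(z - 1) - (k : ℂ) / 2) *
      ((∑ i ∈ Finset.Icc 1 v,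
          ((p : ℂ) - 1) * (p : ℂ) ^ ((i : ℂ) - 1 + (i : ℂ) * (2 * z + (k : ℂ) - 2))) -
        (p : ℂ) ^ ((v : ℂ) + ((v : ℂ) + 1) * (2 * z + (k : ℂ) - 2))) + 1) /
    ((1 - (p : ℂ) ^ (2 * z + (k : ℂ) - 2)) *
      (∑ n ∈ Finset.range (v + 1), (p : ℂ) ^ ((n : ℂ) * (2 * z + (k : ℂ) - 1))))

open Finset

section Algebra

variable {R : Type*} [CommRing R]

/-- `ζ_p(-2s-k+1; v)` in the variable `x = p ^ (s + k/2 - 1)`, with `q = p`. -/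
def truncZeta (q : R) (v : ℕ) (x : R) : R :=
  ∑ n ∈ range (v + 1), (q * x ^ 2) ^ n

theorem truncZeta_reflect {q u w : R} (h : q * u * w = 1) (v : ℕ) :
    (q * u ^ 2) ^ v * truncZeta q v w = truncZeta q v u := by
  have hT : (q * u ^ 2) * (q * w ^ 2) = 1 := by linear_combination (q * u * w + 1) * h
  rw [truncZeta, truncZeta, mul_sum]
  conv_rhs => rw [← sum_range_reflect]
  refine sum_congr rfl fun n hn => ?_
  obtain ⟨m, rfl⟩ := Nat.exists_eq_add_of_le (Nat.lt_succ_iff.mp (mem_range.mp hn))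
  rw [add_tsub_cancel_right, Nat.add_sub_cancel_left, pow_add, mul_right_comm, ← mul_pow, hT,
    one_pow, one_mul]

theorem sub_mul_truncZeta {q u w : R} (h : q * u * w = 1) (v : ℕ) :
    (w - u) * truncZeta q v u = w - u * (q * u ^ 2) ^ v := by
  have hgeom := mul_neg_geom_sum (q * u ^ 2) (v + 1)
  rw [← truncZeta] at hgeom
  linear_combination w * hgeom + u * (truncZeta q v u - (q * u ^ 2) ^ v) * h

theorem sub_mul_truncZeta_mul_truncZeta {q u w : R} (h : q * u * w = 1) (v : ℕ) :
    (u - w) * truncZeta q v u * truncZeta q v w = u * truncZeta q v u - w * truncZeta q v w := by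
  linear_combination -truncZeta q v w * sub_mul_truncZeta h v + u * truncZeta_reflect h v

end Algebra

section Field

variable {F : Type*} [Field F]

/-- The numerator of `f_{p,b}(s)` in the variable `x = p ^ (s + k/2 - 1)`, with `q = p`. -/
def localNum (q : F) (v : ℕ) (x : F) : F :=
  x⁻¹ * ((∑ i ∈ Icc 1 v, (q - 1) * (q⁻¹ * (q * x ^ 2) ^ i)) - (q * x ^ 2) ^ v * x ^ 2) + 1

def localFactor (q : F) (v : ℕ) (x : F) : F :=
  localNum q v x / ((1 - x ^ 2) * truncZeta q v x)

theorem mul_localNum {q x : F} (hq : q ≠ 0) (hx : x ≠ 0) (v : ℕ) :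
    x * localNum q v x = (1 - x) * ((1 + x) * truncZeta q v x - 1) := by
  have hsum : ∑ i ∈ Icc 1 v, (q - 1) * (q⁻¹ * (q * x ^ 2) ^ i)
      = (q - 1) * x ^ 2 * ∑ i ∈ range v, (q * x ^ 2) ^ i := by
    rw [← Ico_add_one_right_eq_Icc, sum_Ico_eq_sum_range, mul_sum]
    refine sum_congr rfl fun i _ => ?_
    field_simp
    ring
  have hS := geom_sum_succ (x := q * x ^ 2) (n := v)
  have hS' := geom_sum_succ' (x := q * x ^ 2) (n := v)
  rw [← truncZeta] at hS hS'
  rw [localNum, hsum, mul_add, mul_one, ← mul_assoc, mul_inv_cancel₀ hx, one_mul]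
  linear_combination x ^ 2 * hS' - hS

theorem one_add_mul_localFactor {q x : F} (hq : q ≠ 0) (hx : x ≠ 0) {v : ℕ}
    (hD : (1 - x ^ 2) * truncZeta q v x ≠ 0) :
    (1 + x) * localFactor q v x = ((1 + x) * truncZeta q v x - 1) / (x * truncZeta q v x) := by
  have hS : truncZeta q v x ≠ 0 := right_ne_zero_of_mul hD
  rw [localFactor, ← mul_div_assoc, div_eq_div_iff hD (mul_ne_zero hx hS)]
  linear_combination (1 + x) * truncZeta q v x * mul_localNum hq hx v

theorem one_add_mul_localFactor_eq {q u w : F} (h : q * u * w = 1) {v : ℕ}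
    (hDu : (1 - u ^ 2) * truncZeta q v u ≠ 0) (hDw : (1 - w ^ 2) * truncZeta q v w ≠ 0) :
    (1 + u) * localFactor q v u = (1 + w) * localFactor q v w := by
  have hq : q ≠ 0 := by rintro rfl; simp at h
  have hu : u ≠ 0 := by rintro rfl; simp at h
  have hw : w ≠ 0 := by rintro rfl; simp at h
  rw [one_add_mul_localFactor hq hu hDu, one_add_mul_localFactor hq hw hDw,
    div_eq_div_iff (mul_ne_zero hu (right_ne_zero_of_mul hDu))
      (mul_ne_zero hw (right_ne_zero_of_mul hDw))]
  linear_combination -sub_mul_truncZeta_mul_truncZeta h v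

end Field

section Cpow

theorem cpow_intCast_add_natCast_mul {x : ℂ} (hx : x ≠ 0) (a : ℤ) (m : ℕ) (e : ℂ) :
    x ^ ((a : ℂ) + m * e) = x ^ a * (x ^ e) ^ m := by
  rw [cpow_add _ _ hx, cpow_intCast, cpow_nat_mul]

variable {p : ℕ} (k : ℤ) (v : ℕ) (z : ℂ)

theorem fLocal_den_eq (hp : (p : ℂ) ≠ 0) :
    (1 - (p : ℂ) ^ (2 * z + (k : ℂ) - 2)) *
        (∑ n ∈ range (v + 1), (p : ℂ) ^ ((n : ℂ) * (2 * z + (k : ℂ) - 1)))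
      = (1 - ((p : ℂ) ^ (z + k / 2 - 1)) ^ 2) *
        truncZeta (p : ℂ) v ((p : ℂ) ^ (z + k / 2 - 1)) := by
  set x := (p : ℂ) ^ (z + k / 2 - 1)
  have hx2 : (p : ℂ) ^ (2 * z + (k : ℂ) - 2) = x ^ 2 := by
    rw [show 2 * z + (k : ℂ) - 2 = ((0 : ℤ) : ℂ) + ((2 : ℕ) : ℂ) * (z + k / 2 - 1) by
        push_cast; ring, cpow_intCast_add_natCast_mul hp, zpow_zero, one_mul]
  rw [hx2, truncZeta]
  refine congrArg _ (sum_congr rfl fun n _ => ?_)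
  rw [show (n : ℂ) * (2 * z + (k : ℂ) - 1)
      = ((n : ℤ) : ℂ) + ((2 * n : ℕ) : ℂ) * (z + k / 2 - 1) by push_cast; ring,
    cpow_intCast_add_natCast_mul hp, zpow_natCast, pow_mul, mul_pow]

theorem fLocal_eq_localFactor (hp : (p : ℂ) ≠ 0) :
    fLocal p k v z = localFactor (p : ℂ) v ((p : ℂ) ^ (z + k / 2 - 1)) := by
  rw [fLocal, fLocal_den_eq k v z hp]
  set x := (p : ℂ) ^ (z + k / 2 - 1)
  have hinv : (p : ℂ) ^ (-(z - 1) - (k : ℂ) / 2) = x⁻¹ := by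
    rw [show -(z - 1) - (k : ℂ) / 2 = -(z + k / 2 - 1) by ring, cpow_neg]
  have hterm (i : ℕ) : (p : ℂ) ^ ((i : ℂ) - 1 + (i : ℂ) * (2 * z + (k : ℂ) - 2))
      = (p : ℂ)⁻¹ * ((p : ℂ) * x ^ 2) ^ i := by
    rw [show (i : ℂ) - 1 + (i : ℂ) * (2 * z + (k : ℂ) - 2)
        = (((i : ℤ) - 1 : ℤ) : ℂ) + ((2 * i : ℕ) : ℂ) * (z + k / 2 - 1) by
          push_cast; ring,
      cpow_intCast_add_natCast_mul hp, zpow_sub₀ hp, zpow_natCast, zpow_one]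
    ring
  have hlast : (p : ℂ) ^ ((v : ℂ) + ((v : ℂ) + 1) * (2 * z + (k : ℂ) - 2))
      = ((p : ℂ) * x ^ 2) ^ v * x ^ 2 := by
    rw [show (v : ℂ) + ((v : ℂ) + 1) * (2 * z + (k : ℂ) - 2)
        = ((v : ℤ) : ℂ) + ((2 * v + 2 : ℕ) : ℂ) * (z + k / 2 - 1) by push_cast; ring,
      cpow_intCast_add_natCast_mul hp, zpow_natCast]
    ring
  rw [localFactor, localNum, hinv, hlast]
  simp only [hterm]

end Cpow

theorem fLocal_ratio_eq_general
    (p : ℕ) (hp : p.Prime) (k : ℤ) (v : ℕ) (s : ℂ)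
    (hden₂ : (1 - (p : ℂ) ^ (2 * (1 - (k : ℂ) - s) + (k : ℂ) - 2)) *
      (∑ n ∈ Finset.range (v + 1),
        (p : ℂ) ^ ((n : ℂ) * (2 * (1 - (k : ℂ) - s) + (k : ℂ) - 1))) ≠ 0)
    (hf : fLocal p k v s ≠ 0)
    (hd : 1 + (p : ℂ) ^ (-s - (k : ℂ) / 2) ≠ 0) :
    fLocal p k v (1 - (k : ℂ) - s) / fLocal p k v s =
      (1 + (p : ℂ) ^ (s + (k : ℂ) / 2 - 1)) / (1 + (p : ℂ) ^ (-s - (k : ℂ) / 2)) := by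
  have hp0 : (p : ℂ) ≠ 0 := Nat.cast_ne_zero.mpr hp.ne_zero
  have hexp : 1 - (k : ℂ) - s + k / 2 - 1 = -s - k / 2 := by ring
  have hpuw : (p : ℂ) * (p : ℂ) ^ (s + k / 2 - 1) * (p : ℂ) ^ (-s - k / 2) = 1 := by
    rw [mul_assoc, ← cpow_add _ _ hp0, show s + k / 2 - 1 + (-s - k / 2) = -1 by ring,
      cpow_neg_one, mul_inv_cancel₀ hp0]
  rw [fLocal_den_eq k v _ hp0, hexp] at hden₂
  rw [fLocal_eq_localFactor k v s hp0] at hf ⊢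
  rw [fLocal_eq_localFactor k v _ hp0, hexp, div_eq_div_iff hf hd, mul_comm]
  exact (one_add_mul_localFactor_eq hpuw (div_ne_zero_iff.mp hf).2 hden₂).symm

/-- The ratio `ψ_{p,b}(s) = f_{p,b}(1-k-s)/f_{p,b}(s)` is independent of `b`;
explicitly it equals `(1 + p^{s+k/2-1})/(1 + p^{-s-k/2})`. -/
theorem fLocal_ratio_eq
    (p : ℕ) (hp : p.Prime) (k : ℤ) (hk : Even k)
    (b : ℤ) (hb : b ≠ 0) (v : ℕ) (hv : v = padicValInt p b) (s : ℂ)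
    (hden₁ : (1 - (p : ℂ) ^ (2 * s + (k : ℂ) - 2)) *
      (∑ n ∈ Finset.range (v + 1), (p : ℂ) ^ ((n : ℂ) * (2 * s + (k : ℂ) - 1))) ≠ 0)
    (hden₂ : (1 - (p : ℂ) ^ (2 * (1 - (k : ℂ) - s) + (k : ℂ) - 2)) *
      (∑ n ∈ Finset.range (v + 1),
        (p : ℂ) ^ ((n : ℂ) * (2 * (1 - (k : ℂ) - s) + (k : ℂ) - 1))) ≠ 0)
    (hf : fLocal p k v s ≠ 0)
    (hd : 1 + (p : ℂ) ^ (-s - (k : ℂ) / 2) ≠ 0) :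
    fLocal p k v (1 - (k : ℂ) - s) / fLocal p k v s =
      (1 + (p : ℂ) ^ (s + (k : ℂ) / 2 - 1)) / (1 + (p : ℂ) ^ (-s - (k : ℂ) / 2)) :=
  fLocal_ratio_eq_general p hp k v s hden₂ hf hd
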